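/- arXiv:1911.09285 — 8 statements merged into one kernel-verified Lean document; each statement's English description precedes it below -/
import Mathlib

section
/- Let κ be an infinite regular cardinal, realized as a type β of cardinality κ, and let M be a nonempty type of cardinality strictly less than κ. A condition of the forcing Add(κ, M × κ) is a function p : M × β × β → Option Bool whose support {x | p x ≠ none} has cardinality strictly less than κ. Then for every permutation τ of M and all conditions p and q there exists a family (σ_m)_{m ∈ M} of permutations of β such that, letting g be the permutation of M × β × β defined by g(m, a, b) = (τ m, σ_m a, b), the condition p ∘ g⁻¹ has support disjoint from the support of q; in particular p ∘ g⁻¹ and q are compatible (they agree on the intersection of their supports, so their union is a condition). -/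
/-- The permutation of `M × β × β` induced by a permutation `τ` of `M` and a family
`σ` of permutations of `β`, acting by `(m, a, b) ↦ (τ m, σ_m a, b)`. -/
def wreathPerm {M β : Type*} (τ : Equiv.Perm M) (σ : M → Equiv.Perm β) :
    Equiv.Perm (M × β × β) where
  toFun x := (τ x.1, σ x.1 x.2.1, x.2.2)
  invFun x := (τ.symm x.1, (σ (τ.symm x.1)).symm x.2.1, x.2.2)
  left_inv := fun ⟨m, a, b⟩ => by simp
  right_inv := fun ⟨m, a, b⟩ => by simp

universe u

open Cardinal Set

lemma exists_perm_image_disjoint {β : Type u} [Infinite β] (A B : Set β)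
    (hA : #A < #β) (hB : #B < #β) :
    ∃ g : Equiv.Perm β, ∀ a ∈ A, g a ∉ B := by
  have hcompl : #(Bᶜ : Set β) = #β := mk_compl_of_infinite B hB
  have hle : #A ≤ #(Bᶜ : Set β) := by rw [hcompl]; exact hA.le
  obtain ⟨f⟩ := hle
  let f' : A ↪ β := f.trans (Function.Embedding.subtype _)
  obtain ⟨g, hg⟩ := Cardinal.extend_function_of_lt f' hA ⟨Equiv.refl β⟩
  refine ⟨g, fun a ha hmem => ?_⟩
  have := hg ⟨a, ha⟩
  rw [this] at hmem
  exact (f ⟨a, ha⟩).2 hmem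

/-- homogeneity of `Add(κ, M × κ)` under the wreath action. -/
theorem stmt0 {β M : Type u} (hreg : Cardinal.IsRegular (Cardinal.mk β))
    [Nonempty M] (hM : Cardinal.mk M < Cardinal.mk β)
    (τ : Equiv.Perm M) (p q : M × β × β → Option Bool)
    (hp : Cardinal.mk {x : M × β × β // p x ≠ none} < Cardinal.mk β)
    (hq : Cardinal.mk {x : M × β × β // q x ≠ none} < Cardinal.mk β) :
    ∃ σ : M → Equiv.Perm β,
      Disjoint {x | (p ∘ (wreathPerm τ σ).symm) x ≠ none} {x | q x ≠ none} ∧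
      ∀ x, (p ∘ (wreathPerm τ σ).symm) x ≠ none → q x ≠ none →
        (p ∘ (wreathPerm τ σ).symm) x = q x := by
  have hinf : Infinite β := Cardinal.infinite_iff.2 hreg.aleph0_le
  classical
  set A : M → Set β := fun m => {a | ∃ b, p (m, a, b) ≠ none} with hA
  set B : M → Set β := fun m => {a | ∃ b, q (τ m, a, b) ≠ none} with hB
  have hAcard : ∀ m, #(A m) < #β := by
    intro m
    refine lt_of_le_of_lt ?_ hp
    refine mk_le_of_injective (f := fun a : A m =>
      (⟨(m, a.1, a.2.choose), a.2.choose_spec⟩ : {x : M × β × β // p x ≠ none})) ?_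
    intro a b hab
    apply Subtype.ext
    have := congrArg (fun x => x.1.2.1) hab
    exact this
  have hBcard : ∀ m, #(B m) < #β := by
    intro m
    refine lt_of_le_of_lt ?_ hq
    refine mk_le_of_injective (f := fun a : B m =>
      (⟨(τ m, a.1, a.2.choose), a.2.choose_spec⟩ : {x : M × β × β // q x ≠ none})) ?_
    intro a b hab
    apply Subtype.ext
    have := congrArg (fun x => x.1.2.1) hab
    exact this
  choose σ hσ using fun m => exists_perm_image_disjoint (A m) (B m) (hAcard m) (hBcard m)
  refine ⟨σ, ?_, ?_⟩
  · rw [Set.disjoint_left]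
    rintro ⟨m', a', b'⟩ hx hq'
    simp only [mem_setOf_eq, Function.comp_apply] at hx hq'
    set m := τ.symm m' with hm
    set a := (σ m).symm a' with ha
    have hxval : (wreathPerm τ σ).symm (m', a', b') = (m, a, b') := rfl
    rw [hxval] at hx
    have haA : a ∈ A m := ⟨b', hx⟩
    have haB : σ m a ∈ B m := by
      refine ⟨b', ?_⟩
      have : τ m = m' := τ.apply_symm_apply m'
      rw [this, ha, (σ m).apply_symm_apply]
      exact hq'
    exact hσ m a haA haB
  · rintro x hx hq'
    exfalso
    -- reuse: contradiction as above
    rcases x with ⟨m', a', b'⟩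
    simp only [Function.comp_apply] at hx hq'
    set m := τ.symm m' with hm
    set a := (σ m).symm a' with ha
    have hxval : (wreathPerm τ σ).symm (m', a', b') = (m, a, b') := rfl
    rw [hxval] at hx
    have haA : a ∈ A m := ⟨b', hx⟩
    have haB : σ m a ∈ B m := by
      refine ⟨b', ?_⟩
      have : τ m = m' := τ.apply_symm_apply m'
      rw [this, ha, (σ m).apply_symm_apply]
      exact hq'
    exact hσ m a haA haB
end

section
/- Let β be an infinite type and let E, F, F' be subsets of β, each of cardinality strictly less than the cardinality of β, with E ∩ F' = ∅. Then there exists a permutation σ of β such that σ fixes E pointwise and σ '' (F \ E) ∩ F' = ∅. -/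
/-- the full symmetric group of an infinite set is `<κ`-support pacifying. -/
theorem stmt1 {β : Type*} [Infinite β] (E F F' : Set β)
    (hE : Cardinal.mk E < Cardinal.mk β)
    (hF : Cardinal.mk F < Cardinal.mk β)
    (hF' : Cardinal.mk F' < Cardinal.mk β)
    (hEF' : E ∩ F' = ∅) :
    ∃ σ : Equiv.Perm β, (∀ x ∈ E, σ x = x) ∧ σ '' (F \ E) ∩ F' = ∅ := by
  classical
  set s : Set β := E ∪ F ∪ F' with hsdef
  have haleph : (Cardinal.aleph0 : Cardinal) ≤ Cardinal.mk β := Cardinal.infinite_iff.mp ‹_›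
  have hs : Cardinal.mk s < Cardinal.mk β := by
    calc Cardinal.mk s ≤ Cardinal.mk E + Cardinal.mk F + Cardinal.mk F' := by
          refine le_trans (Cardinal.mk_union_le _ _) ?_
          exact add_le_add_left (Cardinal.mk_union_le _ _) _
      _ < Cardinal.mk β :=
          Cardinal.add_lt_of_lt haleph (Cardinal.add_lt_of_lt haleph hE hF) hF'
  have hcompl : Cardinal.mk ↥sᶜ = Cardinal.mk β := Cardinal.mk_compl_of_infinite s hs
  set A : Set β := F \ E with hAdef
  have hAle : Cardinal.mk A ≤ Cardinal.mk ↥sᶜ := by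
    rw [hcompl]
    exact le_trans (Cardinal.mk_le_mk_of_subset Set.diff_subset) hF.le
  obtain ⟨f⟩ := Cardinal.le_def _ _ |>.mp hAle
  set B : Set β := Set.range (fun a : A => (f a : β)) with hBdef
  have hBs : B ⊆ sᶜ := by rintro _ ⟨a, rfl⟩; exact (f a).2
  have hAs : A ⊆ s := fun x hx => Or.inl (Or.inr hx.1)
  have hdisj : Disjoint A B := Set.disjoint_left.mpr fun x hxA hxB =>
    (hBs hxB) (hAs hxA)
  have finj : Function.Injective (fun a : A => (f a : β)) :=
    fun a b h => f.injective (Subtype.ext h)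
  set e : A ≃ B := Equiv.ofInjective _ finj with hedef
  -- permutation on ↥(A ∪ B)
  set p : Equiv.Perm ↥(A ∪ B) :=
    (Equiv.Set.union hdisj).trans
      ((Equiv.sumCongr e e.symm).trans
        ((Equiv.sumComm ↥B ↥A).trans (Equiv.Set.union hdisj).symm)) with hpdef
  set σ : Equiv.Perm β :=
    p.extendDomain (Equiv.refl ↥(A ∪ B) : ↥(A ∪ B) ≃ {x : β // x ∈ A ∪ B}) with hσdef
  have hfix : ∀ x : β, x ∉ A ∪ B → σ x = x := by
    intro x hx
    exact p.extendDomain_apply_not_subtype _ hx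
  have hmaps : ∀ x (hx : x ∈ A), σ x ∈ B := by
    intro x hx
    have hx' : x ∈ A ∪ B := Or.inl hx
    have : σ x = ((p ⟨x, hx'⟩ : ↥(A ∪ B)) : β) := by
      rw [hσdef]
      rw [p.extendDomain_apply_subtype _ hx']
      rfl
    rw [this, hpdef]
    have h1 : Equiv.Set.union hdisj ⟨x, hx'⟩ = Sum.inl ⟨x, hx⟩ :=
      Equiv.Set.union_apply_left _ hx
    simp only [Equiv.trans_apply, h1, Equiv.sumCongr_apply, Sum.map_inl, Equiv.sumComm_apply,
      Sum.swap_inl]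
    have h2 : ((Equiv.Set.union hdisj).symm (Sum.inr (e ⟨x, hx⟩)) : β)
        = ((e ⟨x, hx⟩ : B) : β) := by
      rw [Equiv.Set.union_symm_apply_right]
    rw [h2]
    exact (e ⟨x, hx⟩).2
  refine ⟨σ, ?_, ?_⟩
  · intro x hxE
    apply hfix
    rintro (hxA | hxB)
    · exact hxA.2 hxE
    · exact (hBs hxB) (Or.inl (Or.inl hxE))
  · rw [Set.eq_empty_iff_forall_notMem]
    rintro x ⟨⟨y, hyA, rfl⟩, hxF'⟩
    have hB : σ y ∈ B := hmaps y hyA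
    exact (hBs hB) (Or.inr hxF')
end

section
/- Let M be any type and β an infinite type. For all finite subsets E, F, F' of M × β with E ∩ F' = ∅ there exists a family (σ_m)_{m ∈ M} of permutations of β such that the permutation g of M × β defined by g(m, b) = (m, σ_m b) fixes E pointwise and satisfies g '' (F \ E) ∩ F' = ∅. That is, the wreath-product group {id} ≀ S_β, acting on M × β by fixing the first coordinate and permuting each fiber {m} × β separately, is finitely pacifying. -/
lemma aux_perm {β : Type*} [Infinite β] (T S : Set β) (hT : T.Finite) (hS : S.Finite) :
    ∃ σ : Equiv.Perm β, (∀ b ∈ S, b ∉ T → σ b = b) ∧ (∀ b ∈ T, σ b ∉ S) := by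
  classical
  obtain ⟨C, hCsub, hCcard⟩ := (hT.union hS).infinite_compl.exists_subset_card_eq
    hT.toFinset.card
  set C' : Set β := ↑C with hC'
  have hdisj : Disjoint T C' := by
    rw [Set.disjoint_left]
    intro b hbT hbC
    exact (hCsub hbC) (Or.inl hbT)
  have e : ↥T ≃ ↥C' :=
    ((Equiv.subtypeEquivRight fun x => (hT.mem_toFinset).symm).trans
      (Finset.equivOfCardEq hCcard.symm)).trans
      (Equiv.subtypeEquivRight fun x => Iff.rfl)
  let u : ↥(T ∪ C') ≃ ↥T ⊕ ↥C' := Equiv.Set.union hdisj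
  let ep : Equiv.Perm ↥(T ∪ C') :=
    u.trans ((e.sumCongr e.symm).trans ((Equiv.sumComm _ _).trans u.symm))
  let σ : Equiv.Perm β := Equiv.Perm.subtypeCongr (p := (· ∈ T ∪ C')) ep (Equiv.refl _)
  refine ⟨σ, ?_, ?_⟩
  · intro b hbS hbT
    have hb : b ∉ T ∪ C' := by
      rintro (h | h)
      · exact hbT h
      · exact hCsub h (Or.inr hbS)
    simpa [σ] using Equiv.Perm.subtypeCongr.right_apply ep (Equiv.refl _) hb
  · intro b hbT
    have hb : b ∈ T ∪ C' := Or.inl hbT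
    have h1 : σ b = ↑(ep ⟨b, hb⟩) := Equiv.Perm.subtypeCongr.left_apply ep (Equiv.refl _) hb
    have h2 : ep ⟨b, hb⟩ = u.symm (Sum.inr (e ⟨b, hbT⟩)) := by
      simp only [ep, Equiv.trans_apply]
      congr 1
      rw [show u ⟨b, hb⟩ = Sum.inl ⟨b, hbT⟩ from Equiv.Set.union_apply_left hdisj hbT]
      rfl
    rw [h1, h2, Equiv.Set.union_symm_apply_right]
    intro hmem
    exact hCsub (e ⟨b, hbT⟩).2 (Or.inr hmem)

/-- the wreath product `{id} ≀ S_β`, acting on `M × β` by permuting each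
fiber `{m} × β` separately, is finitely pacifying. -/
theorem stmt3 {M β : Type*} [Infinite β] (E F F' : Set (M × β))
    (hE : E.Finite) (hF : F.Finite) (hF' : F'.Finite)
    (hEF' : E ∩ F' = ∅) :
    ∃ σ : M → Equiv.Perm β,
      (∀ x ∈ E, (x.1, σ x.1 x.2) = x) ∧
      (fun x : M × β => (x.1, σ x.1 x.2)) '' (F \ E) ∩ F' = ∅ := by
  classical
  have hmk : ∀ m : M, Function.Injective (fun b : β => (m, b)) := by
    intro m a b h
    exact (Prod.mk.injEq _ _ _ _).mp h |>.2
  set T : M → Set β := fun m => (fun b => (m, b)) ⁻¹' (F \ E) with hTdef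
  set S : M → Set β := fun m => (fun b => (m, b)) ⁻¹' (E ∪ F') with hSdef
  have hTfin : ∀ m, (T m).Finite := fun m => (hF.diff (t := E)).preimage (Set.injOn_of_injective (hmk m))
  have hSfin : ∀ m, (S m).Finite := fun m => (hE.union hF').preimage (Set.injOn_of_injective (hmk m))
  choose σ hσ1 hσ2 using fun m => aux_perm (T m) (S m) (hTfin m) (hSfin m)
  refine ⟨σ, ?_, ?_⟩
  · rintro ⟨m, b⟩ hx
    have hbS : b ∈ S m := Or.inl hx
    have hbT : b ∉ T m := fun h => h.2 hx
    simp only [hσ1 m b hbS hbT]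
  · ext y
    simp only [Set.mem_inter_iff, Set.mem_image, Set.mem_empty_iff_false, iff_false, not_and]
    rintro ⟨⟨m, b⟩, hx, rfl⟩ hy
    exact hσ2 m b hx (Or.inr hy)
end

section
/- Let β be an infinite type. The partial order Add(#β, 1), whose elements are the functions p : β → Option Bool with support {x | p x ≠ none} of cardinality strictly less than #β, ordered by reverse extension (p ≤ q iff p extends q, i.e. q x ≠ none implies p x = q x), is order-isomorphic to its own square (the product of two copies of itself with the coordinatewise order). In particular Add(#β, 1) is order-isomorphic to each of its finite powers. -/
/-- A condition of the forcing `Add(#β, 1)`: a partial function `β → Bool`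
(encoded as `β → Option Bool`) whose support has cardinality `< #β`. -/
def AddCond (β : Type*) : Type _ :=
  {p : β → Option Bool // Cardinal.mk {x : β // p x ≠ none} < Cardinal.mk β}

/-- Conditions are ordered by reverse extension: `p ≤ q` iff `p` extends `q`. -/
instance AddCond.instPartialOrder (β : Type*) : PartialOrder (AddCond β) where
  le p q := ∀ x, q.1 x ≠ none → p.1 x = q.1 x
  le_refl p x _ := rfl
  le_trans p q r hpq hqr x hx := by
    have h1 : q.1 x = r.1 x := hqr x hx
    have h2 : p.1 x = q.1 x := hpq x (by rw [h1]; exact hx)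
    rw [h2, h1]
  le_antisymm p q hpq hqp := by
    apply Subtype.ext; funext x
    by_cases hq : q.1 x = none
    · by_cases hp : p.1 x = none
      · rw [hp, hq]
      · have h := hqp x hp
        rw [hq] at h
        exact absurd h.symm hp
    · exact hpq x hq

open Cardinal

/-- Product of order isomorphisms. -/
def OrderIso.prodCongr' {α β γ δ : Type*} [Preorder α] [Preorder β] [Preorder γ] [Preorder δ]
    (e₁ : α ≃o β) (e₂ : γ ≃o δ) : α × γ ≃o β × δ where
  toEquiv := e₁.toEquiv.prodCongr e₂.toEquiv
  map_rel_iff' := by simp [Prod.le_def]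

namespace AddCond

universe u
variable {β γ : Type u}

lemma le_iff {p q : AddCond β} : p ≤ q ↔ ∀ x, q.1 x ≠ none → p.1 x = q.1 x := Iff.rfl

/-- Transport along an equivalence of index types. -/
noncomputable def congrIso (e : β ≃ γ) : AddCond β ≃o AddCond γ where
  toFun p := ⟨p.1 ∘ e.symm, by
    have h1 : #{y : γ // (p.1 ∘ e.symm) y ≠ none} = #{x : β // p.1 x ≠ none} :=
      Cardinal.mk_congr
        ((e.subtypeEquiv (fun x => by simp [Function.comp])).symm)
    rw [h1, ← Cardinal.mk_congr e]
    exact p.2⟩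
  invFun p := ⟨p.1 ∘ e, by
    have h1 : #{x : β // (p.1 ∘ e) x ≠ none} = #{y : γ // p.1 y ≠ none} :=
      Cardinal.mk_congr (e.subtypeEquiv (fun x => by simp [Function.comp]))
    rw [h1, Cardinal.mk_congr e]
    exact p.2⟩
  left_inv p := by apply Subtype.ext; funext x; simp
  right_inv p := by apply Subtype.ext; funext x; simp
  map_rel_iff' {p q} := by
    constructor
    · intro h x hx
      have := h (e x) (by show q.1 (e.symm (e x)) ≠ none; simpa using hx)
      have h2 : p.1 (e.symm (e x)) = q.1 (e.symm (e x)) := this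
      simpa using h2
    · intro h y hy
      exact h (e.symm y) hy

/-- The square of `Add(#β,1)` is the forcing on `β ⊕ β`. -/
noncomputable def sumIso [Infinite β] : AddCond (β ⊕ β) ≃o AddCond β × AddCond β where
  toFun p :=
    (⟨fun x => p.1 (.inl x), by
        have hle : #{x : β // p.1 (.inl x) ≠ none} ≤ #{z : β ⊕ β // p.1 z ≠ none} :=
          Cardinal.mk_le_of_injective (f := fun x => (⟨.inl x.1, x.2⟩ : {z : β ⊕ β // p.1 z ≠ none}))
            (fun a b h => Subtype.ext (by simpa using Subtype.ext_iff.mp h))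
        calc #{x : β // p.1 (.inl x) ≠ none} ≤ #{z : β ⊕ β // p.1 z ≠ none} := hle
          _ < #(β ⊕ β) := p.2
          _ = #β := by simp [Cardinal.add_eq_self (Cardinal.aleph0_le_mk β)]⟩,
     ⟨fun x => p.1 (.inr x), by
        have hle : #{x : β // p.1 (.inr x) ≠ none} ≤ #{z : β ⊕ β // p.1 z ≠ none} :=
          Cardinal.mk_le_of_injective (f := fun x => (⟨.inr x.1, x.2⟩ : {z : β ⊕ β // p.1 z ≠ none}))
            (fun a b h => Subtype.ext (by simpa using Subtype.ext_iff.mp h))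
        calc #{x : β // p.1 (.inr x) ≠ none} ≤ #{z : β ⊕ β // p.1 z ≠ none} := hle
          _ < #(β ⊕ β) := p.2
          _ = #β := by simp [Cardinal.add_eq_self (Cardinal.aleph0_le_mk β)]⟩)
  invFun pq := ⟨Sum.elim pq.1.1 pq.2.1, by
    have h1 : #{z : β ⊕ β // Sum.elim pq.1.1 pq.2.1 z ≠ none}
        = #{x : β // pq.1.1 x ≠ none} + #{x : β // pq.2.1 x ≠ none} := by
      rw [Cardinal.mk_congr (Equiv.subtypeSum
        (p := fun z => Sum.elim pq.1.1 pq.2.1 z ≠ none)), Cardinal.mk_sum]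
      simp
    rw [h1]
    calc #{x : β // pq.1.1 x ≠ none} + #{x : β // pq.2.1 x ≠ none}
        < #β := Cardinal.add_lt_of_lt (Cardinal.aleph0_le_mk β) pq.1.2 pq.2.2
      _ = #(β ⊕ β) := by simp [Cardinal.add_eq_self (Cardinal.aleph0_le_mk β)]⟩
  left_inv p := by apply Subtype.ext; funext z; cases z <;> rfl
  right_inv pq := by
    refine Prod.ext ?_ ?_ <;> · apply Subtype.ext; funext x; rfl
  map_rel_iff' {p q} := by
    constructor
    · rintro ⟨h1, h2⟩ z hz
      cases z with
      | inl x => exact h1 x hz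
      | inr x => exact h2 x hz
    · intro h
      exact ⟨fun x hx => h (.inl x) hx, fun x hx => h (.inr x) hx⟩

end AddCond

/-- for an infinite type `β`, the forcing `Add(#β, 1)` is
order-isomorphic to its own square, and in particular to each of its finite powers. -/
theorem stmt4 (β : Type*) [Infinite β] :
    Nonempty (AddCond β ≃o AddCond β × AddCond β) ∧
    ∀ n : ℕ, Nonempty (AddCond β ≃o (Fin (n + 1) → AddCond β)) := by
  have hmk : #(β ⊕ β) = #β := by
    simp [Cardinal.mk_sum, Cardinal.add_eq_self (Cardinal.aleph0_le_mk β)]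
  obtain ⟨e⟩ := Cardinal.eq.mp hmk.symm
  have sq : AddCond β ≃o AddCond β × AddCond β :=
    (AddCond.congrIso e).trans AddCond.sumIso
  refine ⟨⟨sq⟩, fun n => ?_⟩
  induction n with
  | zero => exact ⟨(OrderIso.funUnique (Fin 1) (AddCond β)).symm⟩
  | succ n ih =>
      obtain ⟨f⟩ := ih
      exact ⟨sq.trans (((OrderIso.refl (AddCond β)).prodCongr' f).trans
        (Fin.consOrderIso (fun _ => AddCond β)))⟩
end

section
/- Let F be a field in which 2 ≠ 0, let i ∈ F satisfy i² = −1, and let π be a ring automorphism of F such that π ∘ π is the identity and π(i) = i. If a, b ∈ F satisfy π(a) = b and π(b) = a, and there exists z ∈ F with z² = a − b, then a = b. (Consequently, an algebraically closed field of characteristic ≠ 2 admits no automorphism of order 2 that fixes a square root of −1 and swaps two distinct elements.) -/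
/-- if `π` is a ring automorphism of order at most two of a field of
characteristic `≠ 2` fixing a square root `i` of `-1`, and `π` swaps `a` and `b`,
and `a - b` has a square root, then `a = b`. -/
theorem stmt6 {F : Type*} [Field F] (h2 : (2 : F) ≠ 0)
    (i : F) (hi : i ^ 2 = -1) (π : F ≃+* F)
    (hππ : ∀ x, π (π x) = x) (hπi : π i = i)
    (a b : F) (hab : π a = b) (hba : π b = a)
    (hsq : ∃ z : F, z ^ 2 = a - b) : a = b := by
  obtain ⟨z, hz⟩ := hsq
  suffices hz0 : z = 0 by linear_combination -hz + z * hz0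
  have h' : π z ^ 2 = b - a := by
    rw [← map_pow, hz, map_sub, hab, hba]
  have hsq2 : (π z) ^ 2 = (i * z) ^ 2 := by
    rw [mul_pow, hi, hz]; linear_combination h'
  have hfac : (π z - i * z) * (π z + i * z) = 0 := by linear_combination hsq2
  rcases mul_eq_zero.mp hfac with h | h
  · have h1 : π z = i * z := by linear_combination h
    have h2' : z = π (π z) := (hππ z).symm
    rw [h1, map_mul, hπi, h1] at h2'
    have h3 : 2 * z = 0 := by linear_combination h2' + z * hi
    exact (mul_eq_zero.mp h3).resolve_left h2
  · have h1 : π z = -(i * z) := by linear_combination h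
    have h2' : z = π (π z) := (hππ z).symm
    rw [h1, map_neg, map_mul, hπi, h1] at h2'
    have h3 : 2 * z = 0 := by linear_combination h2' + z * hi
    exact (mul_eq_zero.mp h3).resolve_left h2
end

section
/- Let F be a field, V an F-vector space, and W a subspace of V such that there exist vectors u, v ∈ V whose images in the quotient V/W are linearly independent. Let T : V → V be a linear map that commutes with every linear automorphism of V fixing W pointwise (i.e. for every linear automorphism S of V with S w = w for all w ∈ W, one has S(T x) = T(S x) for all x ∈ V). Then T is scalar multiplication: there exists c ∈ F such that T x = c • x for all x ∈ V. -/
/-- if a vector space `V` has two vectors linearly independent over a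
subspace `W`, then every linear endomorphism of `V` commuting with all linear
automorphisms of `V` fixing `W` pointwise is a scalar multiplication. -/
theorem stmt7 {F V : Type*} [Field F] [AddCommGroup V] [Module F V]
    (W : Submodule F V) (u v : V)
    (huv : LinearIndependent F
      ![(Submodule.Quotient.mk u : V ⧸ W), Submodule.Quotient.mk v])
    (T : V →ₗ[F] V)
    (hT : ∀ S : V ≃ₗ[F] V, (∀ w ∈ W, S w = w) → ∀ x : V, S (T x) = T (S x)) :
    ∃ c : F, ∀ x : V, T x = c • x := by
  classical
  set q : V →ₗ[F] (V ⧸ W) := W.mkQ with hq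
  -- basis of the span and dual functionals on the quotient
  let B := Module.Basis.span huv
  obtain ⟨φ, hφ⟩ := LinearMap.exists_extend (B.coord 0)
  obtain ⟨ψ, hψ⟩ := LinearMap.exists_extend (B.coord 1)
  have hmem : ∀ i : Fin 2, (![(Submodule.Quotient.mk u : V ⧸ W), Submodule.Quotient.mk v] i)
      ∈ Submodule.span F (Set.range ![(Submodule.Quotient.mk u : V ⧸ W), Submodule.Quotient.mk v]) :=
    fun i => Submodule.subset_span ⟨i, rfl⟩
  have hφ' : ∀ i, φ (![(Submodule.Quotient.mk u : V ⧸ W), Submodule.Quotient.mk v] i)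
      = (B.coord 0) (B i) := by
    intro i
    have := LinearMap.congr_fun hφ (B i)
    simpa [B, Module.Basis.span_apply huv i] using this
  have hψ' : ∀ i, ψ (![(Submodule.Quotient.mk u : V ⧸ W), Submodule.Quotient.mk v] i)
      = (B.coord 1) (B i) := by
    intro i
    have := LinearMap.congr_fun hψ (B i)
    simpa [B, Module.Basis.span_apply huv i] using this
  set f : V →ₗ[F] F := φ.comp q with hf
  set g : V →ₗ[F] F := ψ.comp q with hg
  have hfu : f u = 1 := by
    have := hφ' 0; simpa [f, q, Submodule.mkQ_apply] using this
  have hfv : f v = 0 := by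
    have := hφ' 1; simpa [f, q, Submodule.mkQ_apply] using this
  have hgu : g u = 0 := by
    have := hψ' 0; simpa [g, q, Submodule.mkQ_apply] using this
  have hgv : g v = 1 := by
    have := hψ' 1; simpa [g, q, Submodule.mkQ_apply] using this
  have hfW : ∀ w ∈ W, f w = 0 := by
    intro w hw; simp [f, q, (Submodule.Quotient.mk_eq_zero W).2 hw, Submodule.mkQ_apply]
  have hgW : ∀ w ∈ W, g w = 0 := by
    intro w hw; simp [g, q, (Submodule.Quotient.mk_eq_zero W).2 hw, Submodule.mkQ_apply]
  -- key identity via transvections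
  have key : ∀ (h : V →ₗ[F] F), (∀ w ∈ W, h w = 0) → ∀ w : V, h w = 0 →
      ∀ x : V, h (T x) • w = h x • T w := by
    intro h hW w hw x
    let A : V →ₗ[F] V := LinearMap.id + h.smulRight w
    let Bm : V →ₗ[F] V := LinearMap.id - h.smulRight w
    have hAB : A.comp Bm = LinearMap.id := by
      ext y
      simp [A, Bm, hw, smul_smul, sub_smul, add_smul]
    have hBA : Bm.comp A = LinearMap.id := by
      ext y
      simp [A, Bm, hw, smul_smul, sub_smul, add_smul]
    let S : V ≃ₗ[F] V := LinearEquiv.ofLinear A Bm hAB hBA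
    have hSfix : ∀ z ∈ W, S z = z := by
      intro z hz
      simp [S, A, hW z hz]
    have := hT S hSfix x
    have hSx : ∀ y : V, S y = y + h y • w := fun y => rfl
    rw [hSx, hSx, map_add, map_smul] at this
    exact add_left_cancel this
  set c := f (T u) with hc
  have key1 : ∀ w : V, f w = 0 → T w = c • w := by
    intro w hw
    have := key f hfW w hw u
    rw [hfu, one_smul] at this
    exact this.symm
  have hTv : T v = c • v := key1 v hfv
  have hTu : T u = c • u := by
    have := key g hgW u hgu v
    rw [hgv, one_smul, hTv, map_smul, smul_eq_mul, hgv, mul_one] at this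
    exact this.symm
  refine ⟨c, fun x => ?_⟩
  have hx0 : f (x - f x • u) = 0 := by
    simp [hfu]
  have h1 : T x = T (x - f x • u) + f x • T u := by
    conv_lhs => rw [show x = (x - f x • u) + f x • u from by abel]
    rw [map_add, map_smul]
  rw [h1, key1 _ hx0, hTu, smul_sub, smul_comm]
  abel
end

section
/- Let F be a field, V an F-vector space, and W a subspace of V. Let T : V → V be a linear map that commutes with every linear automorphism of V fixing W pointwise. Then for every v ∈ V with v ∉ W, the vector T v lies in the subspace W ⊔ F•v generated by W and v. -/
/-- if `T` commutes with every linear automorphism fixing `W` pointwise,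
then for every `v ∉ W` the vector `T v` lies in the subspace generated by `W` and `v`. -/
theorem stmt11 {F V : Type*} [Field F] [AddCommGroup V] [Module F V]
    (W : Submodule F V) (T : V →ₗ[F] V)
    (hT : ∀ S : V ≃ₗ[F] V, (∀ w ∈ W, S w = w) → ∀ x : V, S (T x) = T (S x)) :
    ∀ v : V, v ∉ W → T v ∈ W ⊔ (F ∙ v) := by
  intro v hv
  by_contra hTv
  have hv0 : v ≠ 0 := fun h => hv (h ▸ W.zero_mem)
  set U := W ⊔ (F ∙ v) with hU
  have hvU : v ∈ U := Submodule.mem_sup_right (Submodule.mem_span_singleton_self v)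
  set q := U.mkQ with hq
  have ht : q (T v) ≠ 0 := by
    simpa [hq, Submodule.Quotient.mk_eq_zero] using hTv
  set e := LinearEquiv.toSpanNonzeroSingleton F _ (q (T v)) ht with he
  obtain ⟨φ, hφ⟩ := LinearMap.exists_extend (e.symm : (F ∙ q (T v)) →ₗ[F] F)
  have hφt : φ (q (T v)) = 1 := by
    have h1 : (φ ∘ₗ (F ∙ q (T v)).subtype) ⟨q (T v), Submodule.mem_span_singleton_self _⟩ = 1 := by
      rw [hφ]
      have : e 1 = ⟨q (T v), Submodule.mem_span_singleton_self _⟩ := by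
        ext; simp [he, LinearEquiv.toSpanNonzeroSingleton_apply]
      rw [← this]
      simp
    simpa using h1
  -- ψ vanishes on U, ψ (T v) = 1
  set ψ : V →ₗ[F] F := φ ∘ₗ q with hψ
  have hψU : ∀ u ∈ U, ψ u = 0 := by
    intro u hu
    have h0 : q u = 0 := by
      simp [hq, Submodule.Quotient.mk_eq_zero, hu]
    simp [hψ, h0]
  have hψT : ψ (T v) = 1 := hφt
  set f : V →ₗ[F] V := ψ.smulRight v with hf
  have hfU : ∀ u ∈ U, f u = 0 := by
    intro u hu; simp [hf, hψU u hu]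
  have hff : ∀ x, f (f x) = 0 := by
    intro x
    have : f x = ψ x • v := rfl
    rw [this]
    simp [hf, hψU v hvU]
  have hcomp1 : (LinearMap.id + f) ∘ₗ (LinearMap.id - f) = LinearMap.id := by
    ext x
    simp [LinearMap.sub_apply, map_sub, hff x]
  have hcomp2 : (LinearMap.id - f) ∘ₗ (LinearMap.id + f) = LinearMap.id := by
    ext x
    simp [LinearMap.add_apply, map_add, hff x]
  set S : V ≃ₗ[F] V := LinearEquiv.ofLinear (LinearMap.id + f) (LinearMap.id - f) hcomp1 hcomp2 with hS
  have hSfix : ∀ w ∈ W, S w = w := by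
    intro w hw
    have : f w = 0 := hfU w (Submodule.mem_sup_left hw)
    simp [hS, this]
  have hSv : S v = v := by simp [hS, hfU v hvU]
  have := hT S hSfix v
  rw [hSv] at this
  have hSTv : S (T v) = T v + ψ (T v) • v := by simp [hS, hf]
  rw [hSTv, hψT, one_smul] at this
  exact hv0 (add_eq_left.mp this)
end

section
/- Let F be a field, V an F-vector space, and W a subspace of V. Let T : V → V be a linear map that commutes with every linear automorphism of V fixing W pointwise. If v ∈ V satisfies v ∉ W and T v ∈ W, and there exists u ∈ V such that the images of u and v in the quotient V/W are linearly independent, then T v = 0. -/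
noncomputable def shearAux {F V : Type*} [Field F] [AddCommGroup V] [Module F V]
    (h : V →ₗ[F] F) (d : V) (c : F) (hc : 1 + h d = c) (hc0 : c ≠ 0) : V ≃ₗ[F] V :=
  LinearEquiv.ofLinear (LinearMap.id + h.smulRight d) (LinearMap.id - c⁻¹ • h.smulRight d)
    (by
      ext x
      have hd : h d = c - 1 := by rw [← hc]; ring
      simp only [LinearMap.comp_apply, LinearMap.add_apply, LinearMap.sub_apply,
        LinearMap.smul_apply, LinearMap.smulRight_apply, LinearMap.id_apply, map_sub, map_add,
        map_smul, smul_eq_mul, hd, LinearMap.id_coe, id_eq]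
      match_scalars <;> field_simp <;> ring)
    (by
      ext x
      have hd : h d = c - 1 := by rw [← hc]; ring
      simp only [LinearMap.comp_apply, LinearMap.add_apply, LinearMap.sub_apply,
        LinearMap.smul_apply, LinearMap.smulRight_apply, LinearMap.id_apply, map_sub, map_add,
        map_smul, smul_eq_mul, hd, LinearMap.id_coe, id_eq]
      match_scalars <;> field_simp <;> ring)

theorem shearAux_apply {F V : Type*} [Field F] [AddCommGroup V] [Module F V]
    (h : V →ₗ[F] F) (d : V) (c : F) (hc : 1 + h d = c) (hc0 : c ≠ 0) (x : V) :
    shearAux h d c hc hc0 x = x + h x • d := rfl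

theorem dualAux {F Q : Type*} [Field F] [AddCommGroup Q] [Module F Q]
    {w : Fin 2 → Q} (hli : LinearIndependent F w) (i : Fin 2) :
    ∃ f : Q →ₗ[F] F, ∀ j, f (w j) = if i = j then 1 else 0 := by
  classical
  let b := Module.Basis.span hli
  obtain ⟨g, hg⟩ := LinearMap.exists_extend (b.coord i)
  refine ⟨g, fun j => ?_⟩
  have : w j = (Submodule.span F (Set.range w)).subtype (b j) := by
    simp [b, Module.Basis.span_apply]
  rw [this, ← LinearMap.comp_apply, hg]
  simp [Module.Basis.coord_apply, Finsupp.single_apply, eq_comm]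

/-- if `T` commutes with every linear automorphism fixing `W` pointwise,
`v ∉ W`, `T v ∈ W`, and some `u` is linearly independent from `v` over `W`,
then `T v = 0`. -/
theorem stmt12 {F V : Type*} [Field F] [AddCommGroup V] [Module F V]
    (W : Submodule F V) (T : V →ₗ[F] V)
    (hT : ∀ S : V ≃ₗ[F] V, (∀ w ∈ W, S w = w) → ∀ x : V, S (T x) = T (S x))
    (v : V) (hv : v ∉ W) (hTv : T v ∈ W)
    (hu : ∃ u : V, LinearIndependent F
      ![(Submodule.Quotient.mk u : V ⧸ W), Submodule.Quotient.mk v]) :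
    T v = 0 := by
  obtain ⟨u, hli⟩ := hu
  obtain ⟨f0, hf0⟩ := dualAux hli 0
  obtain ⟨f1, hf1⟩ := dualAux hli 1
  set fu : V →ₗ[F] F := f0 ∘ₗ W.mkQ with hfu_def
  set fv : V →ₗ[F] F := f1 ∘ₗ W.mkQ with hfv_def
  have hfu_u : fu u = 1 := by simpa [hfu_def] using hf0 0
  have hfu_v : fu v = 0 := by simpa [hfu_def] using hf0 1
  have hfv_u : fv u = 0 := by simpa [hfv_def] using hf1 0
  have hfv_v : fv v = 1 := by simpa [hfv_def] using hf1 1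
  have hfuW : ∀ w ∈ W, fu w = 0 := fun w hw => by
    simp [hfu_def, (Submodule.Quotient.mk_eq_zero W).2 hw]
  have hfvW : ∀ w ∈ W, fv w = 0 := fun w hw => by
    simp [hfv_def, (Submodule.Quotient.mk_eq_zero W).2 hw]
  -- First shear: x ↦ x + fv x • u ; gives T u = 0
  have hc1 : 1 + fv u = 1 := by rw [hfv_u]; ring
  let S1 := shearAux fv u 1 hc1 one_ne_zero
  have hS1W : ∀ w ∈ W, S1 w = w := fun w hw => by
    rw [shearAux_apply, hfvW w hw, zero_smul, add_zero]
  have hTu : T u = 0 := by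
    have h := hT S1 hS1W v
    rw [shearAux_apply, shearAux_apply, hfvW _ hTv, hfv_v, zero_smul, add_zero, one_smul,
      map_add] at h
    exact left_eq_add.mp h
  -- Second shear: x ↦ x + (fv - fu) x • (u - v) ; sends v to u
  have hc2 : 1 + (fv - fu) (u - v) = -1 := by
    simp [map_sub, hfv_u, hfv_v, hfu_u, hfu_v]
  let S2 := shearAux (fv - fu) (u - v) (-1) hc2 (neg_ne_zero.2 one_ne_zero)
  have hS2W : ∀ w ∈ W, S2 w = w := fun w hw => by
    rw [shearAux_apply]
    simp [hfvW w hw, hfuW w hw]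
  have h := hT S2 hS2W v
  have hTvW : (fv - fu) (T v) = 0 := by simp [hfvW _ hTv, hfuW _ hTv]
  rw [shearAux_apply, shearAux_apply, hTvW, zero_smul, add_zero] at h
  have hSv : v + ((fv - fu) v) • (u - v) = u := by
    simp [hfv_v, hfu_v]
  rw [hSv, hTu] at h
  exact h
end
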